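/- For n ≥ 6, in every H₄-free completion (Oₙ, R') of the holey 3-hypertournament Oₙ, the triple (1,2,3) is not in R'. -/
import Mathlib


/-- The 3-hypertournament H₄ on 4 points (automorphism group Alt(4)); with respect to
the natural order of Fin 4 its hyperedges are {0,1,2} and {0,2,3}. -/
def H4rel : Fin 4 → Fin 4 → Fin 4 → Prop := fun x y z =>
  (x,y,z) = ((0,1,2) : Fin 4 × Fin 4 × Fin 4) ∨ (x,y,z) = ((1,2,0) : Fin 4 × Fin 4 × Fin 4) ∨
  (x,y,z) = ((2,0,1) : Fin 4 × Fin 4 × Fin 4) ∨ (x,y,z) = ((0,3,1) : Fin 4 × Fin 4 × Fin 4) ∨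
  (x,y,z) = ((3,1,0) : Fin 4 × Fin 4 × Fin 4) ∨ (x,y,z) = ((1,0,3) : Fin 4 × Fin 4 × Fin 4) ∨
  (x,y,z) = ((0,2,3) : Fin 4 × Fin 4 × Fin 4) ∨ (x,y,z) = ((2,3,0) : Fin 4 × Fin 4 × Fin 4) ∨
  (x,y,z) = ((3,0,2) : Fin 4 × Fin 4 × Fin 4) ∨ (x,y,z) = ((1,3,2) : Fin 4 × Fin 4 × Fin 4) ∨
  (x,y,z) = ((3,2,1) : Fin 4 × Fin 4 × Fin 4) ∨ (x,y,z) = ((2,1,3) : Fin 4 × Fin 4 × Fin 4)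

/-- R contains no induced copy of H₄. -/
def H4FreeOn {A : Type*} (R : A → A → A → Prop) : Prop :=
  ¬ ∃ f : Fin 4 → A, Function.Injective f ∧ ∀ x y z, H4rel x y z ↔ R (f x) (f y) (f z)

/-- A 3-hypertournament on the set S of vertices. -/
def IsHyper3On (S : Set ℕ) (R : ℕ → ℕ → ℕ → Prop) : Prop :=
  (∀ a b c, R a b c → a ∈ S ∧ b ∈ S ∧ c ∈ S ∧ a ≠ b ∧ b ≠ c ∧ a ≠ c) ∧
  (∀ a b c, R a b c → R b c a) ∧
  (∀ a b c, a ∈ S → b ∈ S → c ∈ S → a ≠ b → b ≠ c → a ≠ c → (R a b c ↔ ¬ R a c b))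

/-- The oriented triples of the gadget chain Oₙ on vertices {1,…,n} (vertices 1,…,n of
the paper), before closing under cyclic rotation.  These are exactly the oriented
triples of the gadget copies realizing
123 ⇒ 234 ⇒ … ⇒ (n−2)(n−1)n ⇒ ¬(n−2)n1 ⇒ ¬n12 ⇒ ¬123. -/
def OnBase (n : ℕ) (x y z : ℕ) : Prop :=
  (∃ i, 1 ≤ i ∧ i + 3 ≤ n ∧
    ((x, y, z) = (i, i + 2, i + 3) ∨ (x, y, z) = (i, i + 3, i + 1))) ∨
  (x, y, z) = (n - 1, 1, n) ∨ (x, y, z) = (n - 2, 1, n - 1) ∨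
  (x, y, z) = (n - 2, 2, 1) ∨ (x, y, z) = (n - 2, n, 2) ∨
  (x, y, z) = (n, 3, 2) ∨ (x, y, z) = (n, 1, 3)

/-- The holey 3-hypertournament Oₙ: the rotation closure of OnBase; all other triples
on {1,…,n} are holes. -/
def OnRel (n : ℕ) (x y z : ℕ) : Prop := OnBase n x y z ∨ OnBase n y z x ∨ OnBase n z x y

lemma h4key {n : ℕ} {R' : ℕ → ℕ → ℕ → Prop}
    (hhyper : IsHyper3On (Set.Icc 1 n) R') (hfree : H4FreeOn R')
    {a b c d : ℕ}
    (hab : a ≠ b) (hac : a ≠ c) (had : a ≠ d) (hbc : b ≠ c) (hbd : b ≠ d) (hcd : c ≠ d)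
    (h1 : R' a b c) (h2 : R' a c d) (h3 : R' a d b) (h4 : R' b d c) : False := by
  obtain ⟨hS, hrot, htot⟩ := hhyper
  have neg : ∀ x y z, R' x y z → ¬ R' x z y := by
    intro x y z p
    obtain ⟨hx, hy, hz, u1, u2, u3⟩ := hS x y z p
    exact (htot x y z hx hy hz u1 u2 u3).mp p
  have nrep : ∀ x y z : ℕ, (x = y ∨ y = z ∨ x = z) → ¬ R' x y z := by
    rintro x y z (rfl | rfl | rfl) h
    · exact (hS _ _ _ h).2.2.2.1 rfl
    · exact (hS _ _ _ h).2.2.2.2.1 rfl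
    · exact (hS _ _ _ h).2.2.2.2.2 rfl
  have p1a : R' b c a := hrot _ _ _ h1
  have p1b : R' c a b := hrot _ _ _ p1a
  have p2a : R' c d a := hrot _ _ _ h2
  have p2b : R' d a c := hrot _ _ _ p2a
  have p3a : R' d b a := hrot _ _ _ h3
  have p3b : R' b a d := hrot _ _ _ p3a
  have p4a : R' d c b := hrot _ _ _ h4
  have p4b : R' c b d := hrot _ _ _ p4a
  have m1 : ¬ R' a c b := neg _ _ _ h1
  have m1a : ¬ R' b a c := neg _ _ _ p1a
  have m1b : ¬ R' c b a := neg _ _ _ p1b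
  have m2 : ¬ R' a d c := neg _ _ _ h2
  have m2a : ¬ R' c a d := neg _ _ _ p2a
  have m2b : ¬ R' d c a := neg _ _ _ p2b
  have m3 : ¬ R' a b d := neg _ _ _ h3
  have m3a : ¬ R' d a b := neg _ _ _ p3a
  have m3b : ¬ R' b d a := neg _ _ _ p3b
  have m4 : ¬ R' b c d := neg _ _ _ h4
  have m4a : ¬ R' d b c := neg _ _ _ p4a
  have m4b : ¬ R' c d b := neg _ _ _ p4b
  apply hfree
  refine ⟨![a, b, c, d], ?_, ?_⟩
  · intro x y hxy
    fin_cases x <;> fin_cases y <;>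
      simp only [Matrix.cons_val_zero, Matrix.cons_val_one, Matrix.head_cons,
        Matrix.cons_val_two, Matrix.tail_cons, Matrix.cons_val_three,
        Matrix.cons_val_fin_one, Fin.isValue] at hxy <;>
      first
        | rfl
        | exact absurd hxy (by assumption)
        | exact absurd hxy.symm (by assumption)
  · intro x y z
    fin_cases x <;> fin_cases y <;> fin_cases z <;>
      simp only [Matrix.cons_val_zero, Matrix.cons_val_one, Matrix.head_cons,
        Matrix.cons_val_two, Matrix.tail_cons, Matrix.cons_val_three,
        Matrix.cons_val_fin_one, Fin.isValue] <;>
      first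
        | exact iff_of_true (by unfold H4rel; decide) (by assumption)
        | exact iff_of_false (by unfold H4rel; decide)
            (by first
              | assumption
              | exact nrep _ _ _ (Or.inl rfl)
              | exact nrep _ _ _ (Or.inr (Or.inl rfl))
              | exact nrep _ _ _ (Or.inr (Or.inr rfl)))

/-- for n ≥ 6, in every H₄-free completion of Oₙ the triple (1,2,3) is
not in the relation. -/
theorem stmt15 (n : ℕ) (hn : 6 ≤ n) (R' : ℕ → ℕ → ℕ → Prop)
    (hext : ∀ x y z, OnRel n x y z → R' x y z)
    (hhyper : IsHyper3On (Set.Icc 1 n) R') (hfree : H4FreeOn R') :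
    ¬ R' 1 2 3 := by
  intro h123
  have hrot := hhyper.2.1
  have flip : ∀ x y z, 1 ≤ x → x ≤ n → 1 ≤ y → y ≤ n → 1 ≤ z → z ≤ n →
      x ≠ y → y ≠ z → x ≠ z → ¬ R' x z y → R' x y z := by
    intro x y z hx1 hx2 hy1 hy2 hz1 hz2 u1 u2 u3 hneg
    exact (hhyper.2.2 x y z (Set.mem_Icc.mpr ⟨hx1, hx2⟩) (Set.mem_Icc.mpr ⟨hy1, hy2⟩)
      (Set.mem_Icc.mpr ⟨hz1, hz2⟩) u1 u2 u3).mpr hneg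
  have e1 : ∀ i, 1 ≤ i → i + 3 ≤ n → R' i (i + 2) (i + 3) := fun i u1 u2 =>
    hext _ _ _ (Or.inl (Or.inl ⟨i, u1, u2, Or.inl rfl⟩))
  have e2 : ∀ i, 1 ≤ i → i + 3 ≤ n → R' i (i + 3) (i + 1) := fun i u1 u2 =>
    hext _ _ _ (Or.inl (Or.inl ⟨i, u1, u2, Or.inr rfl⟩))
  have f1 : R' (n - 1) 1 n := hext _ _ _ (Or.inl (Or.inr (Or.inl rfl)))
  have f2 : R' (n - 2) 1 (n - 1) := hext _ _ _ (Or.inl (Or.inr (Or.inr (Or.inl rfl))))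
  have f3 : R' (n - 2) 2 1 := hext _ _ _ (Or.inl (Or.inr (Or.inr (Or.inr (Or.inl rfl)))))
  have f4 : R' (n - 2) n 2 :=
    hext _ _ _ (Or.inl (Or.inr (Or.inr (Or.inr (Or.inr (Or.inl rfl))))))
  have f5 : R' n 3 2 :=
    hext _ _ _ (Or.inl (Or.inr (Or.inr (Or.inr (Or.inr (Or.inr (Or.inl rfl)))))))
  have f6 : R' n 1 3 :=
    hext _ _ _ (Or.inl (Or.inr (Or.inr (Or.inr (Or.inr (Or.inr (Or.inr rfl)))))))
  -- the chain 123 ⇒ 234 ⇒ … ⇒ (n−2)(n−1)n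
  have chain : ∀ i, 1 ≤ i → i + 2 ≤ n → R' i (i + 1) (i + 2) := by
    intro i hi
    induction i, hi using Nat.le_induction with
    | base => intro _; exact h123
    | succ i hi ih =>
      intro h2
      have hprev : R' i (i + 1) (i + 2) := ih (by omega)
      have hi3 : i + 3 ≤ n := by omega
      -- G gadget on {i, i+1, i+2, i+3}
      have hres : R' (i + 1) (i + 2) (i + 3) := by
        apply flip _ _ _ (by omega) (by omega) (by omega) (by omega) (by omega) (by omega)
          (by omega) (by omega) (by omega)
        intro hbad
        exact h4key hhyper hfree (a := i) (b := i + 1) (c := i + 2) (d := i + 3)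
          (by omega) (by omega) (by omega) (by omega) (by omega) (by omega)
          hprev (e1 i hi hi3) (e2 i hi hi3) hbad
      have e : i + 1 + 1 = i + 2 := by omega
      have e' : i + 1 + 2 = i + 3 := by omega
      rw [e, e']
      exact hres
  have hlast : R' (n - 2) (n - 1) n := by
    have h := chain (n - 2) (by omega) (by omega)
    have e : n - 2 + 1 = n - 1 := by omega
    have e' : n - 2 + 2 = n := by omega
    rwa [e, e'] at h
  -- G⁻ gadget on {n−2, n−1, n, 1}: (n−2)(n−1)n ⇒ ¬(n−2)n1
  have step1 : ¬ R' (n - 2) n 1 := fun h =>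
    h4key hhyper hfree (a := n - 2) (b := n - 1) (c := n) (d := 1)
      (by omega) (by omega) (by omega) (by omega) (by omega) (by omega)
      hlast h f2 f1
  have g1 : R' (n - 2) 1 n :=
    flip _ _ _ (by omega) (by omega) (by omega) (by omega) (by omega) (by omega)
      (by omega) (by omega) (by omega) step1
  -- complement gadget on {n−2, n, 1, 2}: ¬(n−2)n1 ⇒ ¬n12
  have step2 : ¬ R' n 1 2 := fun h =>
    h4key hhyper hfree (a := n - 2) (b := 1) (c := n) (d := 2)
      (by omega) (by omega) (by omega) (by omega) (by omega) (by omega)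
      g1 f4 f3 (hrot _ _ _ h)
  have g2 : R' n 2 1 :=
    flip _ _ _ (by omega) (by omega) (by omega) (by omega) (by omega) (by omega)
      (by omega) (by omega) (by omega) step2
  -- complement gadget on {n, 1, 2, 3}: ¬n12 ⇒ ¬123
  exact h4key hhyper hfree (a := n) (b := 2) (c := 1) (d := 3)
    (by omega) (by omega) (by omega) (by omega) (by omega) (by omega)
    g2 f6 f5 (hrot _ _ _ h123)
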